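/- arXiv:2002.00004 — 2 statements merged into one kernel-verified Lean document; each statement's English description precedes it below -/
import Mathlib

section
/- Let d ≥ 2 and suppose ℂ^d admits a family of d+1 mutually unbiased orthonormal bases, with rank-one projections Π_{nk} for n = 1,…,d+1 and k = 1,…,d. Then for every complex d×d matrix ρ with tr(ρ) = 1, one has ρ = Σ_{n=1}^{d+1} Σ_{k=1}^{d} tr(Π_{nk} ρ) · Π_{nk} − I, where I is the d×d identity matrix. -/
open scoped BigOperators

/-- Rank-one orthogonal projection `|v⟩⟨v|` onto a vector `v ∈ ℂ^d`, as a matrix. -/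
noncomputable def proj {d : ℕ} (v : EuclideanSpace ℂ (Fin d)) : Matrix (Fin d) (Fin d) ℂ :=
  Matrix.of fun i j => v i * star (v j)

/-- A family of orthonormal bases of `ℂ^d` is mutually unbiased if
`|⟨e n k, e m l⟩|² = 1/d` for all `n ≠ m` and all `k, l`. -/
def MutuallyUnbiased {d N : ℕ} (e : Fin N → Fin d → EuclideanSpace ℂ (Fin d)) : Prop :=
  ∀ n m : Fin N, n ≠ m → ∀ k l : Fin d,
    ‖(inner ℂ (e n k) (e m l) : ℂ)‖ ^ 2 = 1 / d

/-! Let `S X = ∑ₙₖ tr(Πₙₖ X) Πₙₖ` (`projFrameOp`) and `τ X = tr X • 1`. Within one basis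
`tr(Πₙₖ Πₙₗ) = δₖₗ`, across two bases it is `1/d`, and each basis resolves the identity; this
gives `S ∘ S = S + (d + 1) τ`, `S 1 = (d + 1) 1` and `tr ∘ S = (d + 1) tr`. Hence
`T = id + τ - S` is idempotent. Its trace is `d² + d - d (d + 1) = 0`, and an idempotent is a
projection whose trace is its rank, so `T = 0`, i.e. `S = id + τ`; at `tr ρ = 1` this is the
claim. -/

open Matrix

section

variable {d : ℕ}

lemma trace_proj_mul_proj (u v : EuclideanSpace ℂ (Fin d)) :
    (proj u * proj v).trace = inner ℂ u v * inner ℂ v u := by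
  simp only [Matrix.trace, diag, mul_apply, proj, of_apply, PiLp.inner_apply,
    RCLike.inner_apply, starRingEnd_apply, Finset.sum_mul_sum]
  rw [Finset.sum_comm]
  exact Finset.sum_congr rfl fun i _ => Finset.sum_congr rfl fun j _ => by ring

lemma trace_proj (u : EuclideanSpace ℂ (Fin d)) : (proj u).trace = inner ℂ u u := by
  simp only [Matrix.trace, diag, proj, of_apply, PiLp.inner_apply, RCLike.inner_apply,
    starRingEnd_apply]

lemma Orthonormal.trace_proj {ι : Type*} {v : ι → EuclideanSpace ℂ (Fin d)}
    (hv : Orthonormal ℂ v) (k : ι) : (proj (v k)).trace = 1 := by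
  rw [_root_.trace_proj, inner_self_eq_norm_sq_to_K, hv.1 k]
  simp

lemma Orthonormal.sum_proj {v : Fin d → EuclideanSpace ℂ (Fin d)} (hv : Orthonormal ℂ v) :
    ∑ k, proj (v k) = 1 := by
  have hspan := hv.linearIndependent.span_eq_top_of_card_eq_finrank'
    (by rw [Fintype.card_fin, finrank_euclideanSpace_fin])
  let b := OrthonormalBasis.mk hv hspan.ge
  ext i j
  have := congr($(b.sum_repr' (EuclideanSpace.single j 1)) i)
  simpa [b, proj, Matrix.sum_apply, EuclideanSpace.inner_single_right, Matrix.one_apply,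
    PiLp.single_apply, mul_comm, eq_comm] using this

lemma Orthonormal.sum_trace_proj_mul {v : Fin d → EuclideanSpace ℂ (Fin d)}
    (hv : Orthonormal ℂ v) (X : Matrix (Fin d) (Fin d) ℂ) :
    ∑ k, (proj (v k) * X).trace = X.trace := by
  rw [← trace_sum, ← Finset.sum_mul, hv.sum_proj, one_mul]

lemma Orthonormal.trace_proj_mul_proj {ι : Type*} [DecidableEq ι]
    {v : ι → EuclideanSpace ℂ (Fin d)} (hv : Orthonormal ℂ v) (k l : ι) :
    (proj (v k) * proj (v l)).trace = if k = l then 1 else 0 := by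
  rw [_root_.trace_proj_mul_proj, orthonormal_iff_ite.mp hv, orthonormal_iff_ite.mp hv]
  split_ifs <;> simp_all

lemma MutuallyUnbiased.trace_proj_mul_proj {N : ℕ} {e : Fin N → Fin d → EuclideanSpace ℂ (Fin d)}
    (hmub : MutuallyUnbiased e) {n m : Fin N} (hnm : n ≠ m) (k l : Fin d) :
    (proj (e n k) * proj (e m l)).trace = (d : ℂ)⁻¹ := by
  rw [_root_.trace_proj_mul_proj, ← inner_conj_symm (e m l), RCLike.mul_conj,
    ← RCLike.ofReal_pow, hmub n m hnm k l]
  simp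

noncomputable def projFrameOp {ι : Type*} [Fintype ι] (e : ι → Fin d → EuclideanSpace ℂ (Fin d)) :
    Module.End ℂ (Matrix (Fin d) (Fin d) ℂ) :=
  ∑ n, ∑ k, (traceLinearMap (Fin d) ℂ ℂ ∘ₗ LinearMap.mulLeft ℂ (proj (e n k))).smulRight
    (proj (e n k))

section Frame

variable {ι : Type*} [Fintype ι] {e : ι → Fin d → EuclideanSpace ℂ (Fin d)}

lemma projFrameOp_apply (X : Matrix (Fin d) (Fin d) ℂ) :
    projFrameOp e X = ∑ n, ∑ k, (proj (e n k) * X).trace • proj (e n k) := by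
  simp [projFrameOp, LinearMap.sum_apply]

lemma trace_projFrameOp (horth : ∀ n, Orthonormal ℂ (e n)) :
    LinearMap.trace ℂ _ (projFrameOp e) = Fintype.card ι * d := by
  classical
  simp [projFrameOp, map_sum, (horth _).trace_proj_mul_proj]

lemma projFrameOp_one (horth : ∀ n, Orthonormal ℂ (e n)) :
    projFrameOp e 1 = (Fintype.card ι : ℂ) • 1 := by
  simp [projFrameOp_apply, (horth _).trace_proj, (horth _).sum_proj, Nat.cast_smul_eq_nsmul]

lemma trace_projFrameOp_apply (horth : ∀ n, Orthonormal ℂ (e n)) (X : Matrix (Fin d) (Fin d) ℂ) :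
    (projFrameOp e X).trace = Fintype.card ι * X.trace := by
  simp [projFrameOp_apply, trace_sum, (horth _).trace_proj, (horth _).sum_trace_proj_mul]

end Frame

section Complete

variable {e : Fin (d + 1) → Fin d → EuclideanSpace ℂ (Fin d)}

lemma MutuallyUnbiased.trace_proj_mul_projFrameOp (horth : ∀ n, Orthonormal ℂ (e n))
    (hmub : MutuallyUnbiased e) (n : Fin (d + 1)) (k : Fin d) (X : Matrix (Fin d) (Fin d) ℂ) :
    (proj (e n k) * projFrameOp e X).trace = (proj (e n k) * X).trace + X.trace := by
  have hd : (d : ℂ) ≠ 0 := Nat.cast_ne_zero.mpr (Fin.pos k).ne'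
  have hblock (m : Fin (d + 1)) :
      ∑ l, (proj (e m l) * X).trace * (proj (e n k) * proj (e m l)).trace
        = if m = n then (proj (e n k) * X).trace else X.trace / d := by
    split_ifs with hmn
    · subst hmn
      simp [(horth m).trace_proj_mul_proj]
    · simp_rw [hmub.trace_proj_mul_proj (Ne.symm hmn), ← Finset.sum_mul,
        (horth m).sum_trace_proj_mul, div_eq_mul_inv]
  simp only [projFrameOp_apply, Finset.mul_sum, Matrix.mul_smul, trace_sum, Matrix.trace_smul,
    smul_eq_mul, hblock]
  rw [Finset.sum_ite, Finset.filter_eq', if_pos (Finset.mem_univ n), Finset.filter_ne',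
    Finset.sum_singleton, Finset.sum_const, Finset.card_erase_of_mem (Finset.mem_univ n),
    Finset.card_univ, Fintype.card_fin, Nat.add_sub_cancel, nsmul_eq_mul, mul_div_cancel₀ _ hd]

lemma MutuallyUnbiased.projFrameOp_projFrameOp (horth : ∀ n, Orthonormal ℂ (e n))
    (hmub : MutuallyUnbiased e) (X : Matrix (Fin d) (Fin d) ℂ) :
    projFrameOp e (projFrameOp e X) = projFrameOp e X + ((d + 1) * X.trace) • 1 := by
  rw [projFrameOp_apply (projFrameOp e X)]
  simp_rw [hmub.trace_proj_mul_projFrameOp horth, add_smul, Finset.sum_add_distrib,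
    ← Finset.smul_sum, (horth _).sum_proj, ← projFrameOp_apply, Finset.sum_const,
    Finset.card_univ, Fintype.card_fin]
  rw [← Nat.cast_smul_eq_nsmul ℂ, smul_smul, mul_comm, Nat.cast_add, Nat.cast_one]

lemma MutuallyUnbiased.projFrameOp_eq (horth : ∀ n, Orthonormal ℂ (e n))
    (hmub : MutuallyUnbiased e) :
    projFrameOp e = LinearMap.id + (traceLinearMap (Fin d) ℂ ℂ).smulRight 1 := by
  set T := LinearMap.id + (traceLinearMap (Fin d) ℂ ℂ).smulRight 1 - projFrameOp e
  have hT (X : Matrix (Fin d) (Fin d) ℂ) : T X = X + X.trace • 1 - projFrameOp e X := rfl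
  have htrace_T (X : Matrix (Fin d) (Fin d) ℂ) : (T X).trace = 0 := by
    simp only [hT, trace_sub, trace_add, trace_smul, trace_one, Fintype.card_fin, smul_eq_mul,
      trace_projFrameOp_apply horth, Nat.cast_add, Nat.cast_one]
    ring
  have hprojFrameOp_T (X : Matrix (Fin d) (Fin d) ℂ) : projFrameOp e (T X) = 0 := by
    simp only [hT, map_sub, map_add, map_smul, projFrameOp_one horth, Fintype.card_fin,
      Nat.cast_add, Nat.cast_one, smul_smul, hmub.projFrameOp_projFrameOp horth,
      add_sub_add_left_eq_sub]
    rw [mul_comm, sub_self]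
  have hidem : IsIdempotentElem T := LinearMap.ext fun X => by
    rw [Module.End.mul_apply, hT (T X), htrace_T, hprojFrameOp_T]
    simp
  have htr : LinearMap.trace ℂ _ T = 0 := by
    simp only [T, map_sub, map_add, LinearMap.trace_id, Module.finrank_matrix, Fintype.card_fin,
      Module.finrank_self, mul_one, Nat.cast_mul, LinearMap.trace_smulRight,
      traceLinearMap_apply, trace_one, trace_projFrameOp horth, Nat.cast_add, Nat.cast_one]
    ring
  exact (sub_eq_zero.mp (LinearMap.IsIdempotentElem.eq_zero_of_trace_eq_zero hidem htr)).symm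

end Complete
end

theorem stmt_1_general (d : ℕ)
    (e : Fin (d + 1) → Fin d → EuclideanSpace ℂ (Fin d))
    (horth : ∀ n, Orthonormal ℂ (e n))
    (hmub : MutuallyUnbiased e)
    (ρ : Matrix (Fin d) (Fin d) ℂ) (hρ : ρ.trace = 1) :
    ρ = (∑ n : Fin (d + 1), ∑ k : Fin d,
          (proj (e n k) * ρ).trace • proj (e n k)) - 1 := by
  rw [← projFrameOp_apply, hmub.projFrameOp_eq horth]
  simp [hρ]

theorem stmt_1 (d : ℕ) (hd : 2 ≤ d)
    (e : Fin (d + 1) → Fin d → EuclideanSpace ℂ (Fin d))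
    (horth : ∀ n, Orthonormal ℂ (e n))
    (hmub : MutuallyUnbiased e)
    (ρ : Matrix (Fin d) (Fin d) ℂ) (hρ : ρ.trace = 1) :
    ρ = (∑ n : Fin (d + 1), ∑ k : Fin d,
          (proj (e n k) * ρ).trace • proj (e n k)) - 1 :=
  stmt_1_general d e horth hmub ρ hρ
end

section
/- Let N ≥ 1, d ≥ 1, and let T be the Nd×Nd real block matrix with identity diagonal blocks I_d and off-diagonal blocks D_d all of whose entries are 1/d. Then for every real vector λ = (λ_{nk}) with Σ_{n,k} λ_{nk} = 1, the quadratic form satisfies λᵀ T² λ = N/d + Σ_{n,k} λ_{nk}² − (1/d) Σ_{n=1}^{N} (Σ_{k=1}^{d} λ_{nk})². -/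
open scoped BigOperators
open Matrix

/-- The `Nd × Nd` block matrix with identity diagonal blocks `I_d` and
off-diagonal blocks `D_d` all of whose entries equal `1/d`. -/
noncomputable def Tmat (N d : ℕ) : Matrix (Fin N × Fin d) (Fin N × Fin d) ℝ :=
  Matrix.of fun p q =>
    if p.1 = q.1 then (if p.2 = q.2 then 1 else 0) else 1 / d

lemma Tmat_symm (N d : ℕ) : (Tmat N d)ᵀ = Tmat N d := by
  ext p q
  simp only [Tmat, transpose_apply, of_apply]
  rcases eq_or_ne p.1 q.1 with h | h
  · simp [h, eq_comm]
  · simp [h, Ne.symm h]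

lemma Tmat_mulVec (N d : ℕ) (lam : Fin N × Fin d → ℝ)
    (hlam : ∑ p : Fin N × Fin d, lam p = 1) :
    (Tmat N d).mulVec lam = fun p => lam p + (1 - ∑ k, lam (p.1, k)) / d := by
  funext p
  have step1 : (Tmat N d).mulVec lam p
      = ∑ m : Fin N, (if p.1 = m then lam p else (∑ l, lam (m, l)) / d) := by
    simp only [mulVec, dotProduct, Fintype.sum_prod_type, Tmat, of_apply]
    refine Finset.sum_congr rfl fun m _ => ?_
    rcases eq_or_ne p.1 m with h | h
    · simp only [h, if_true]
      rw [Finset.sum_eq_single p.2]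
      · rw [if_pos rfl, ← h, Prod.mk.eta, one_mul]
      · intro l _ hl; simp [Ne.symm hl]
      · simp
    · simp only [h, if_false, Finset.sum_div]
      exact Finset.sum_congr rfl fun l _ => by ring
  have step2 : ∀ m : Fin N,
      (if p.1 = m then lam p else (∑ l, lam (m, l)) / d)
      = (∑ l, lam (m, l)) / d
        + (if p.1 = m then lam p - (∑ l, lam (m, l)) / d else 0) := by
    intro m; split_ifs <;> ring
  have hS : ∑ m : Fin N, ∑ l, lam (m, l) = 1 := by
    rw [← hlam, Fintype.sum_prod_type]
  rw [step1, Finset.sum_congr rfl fun m _ => step2 m, Finset.sum_add_distrib,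
    Finset.sum_ite_eq Finset.univ p.1
      (fun m => lam p - (∑ l, lam (m, l)) / d),
    ← Finset.sum_div, hS]
  simp only [Finset.mem_univ, if_true]
  ring

theorem stmt_9 (N d : ℕ) (hN : 1 ≤ N) (hd : 1 ≤ d)
    (lam : Fin N × Fin d → ℝ)
    (hlam : ∑ p : Fin N × Fin d, lam p = 1) :
    lam ⬝ᵥ ((Tmat N d * Tmat N d).mulVec lam) =
      (N : ℝ) / d + (∑ p : Fin N × Fin d, lam p ^ 2)
        - (1 / d) * ∑ n : Fin N, (∑ k : Fin d, lam (n, k)) ^ 2 := by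
  have hd0 : (d : ℝ) ≠ 0 := by
    have : 0 < d := hd
    positivity
  have key : lam ⬝ᵥ ((Tmat N d * Tmat N d).mulVec lam)
      = ((Tmat N d).mulVec lam) ⬝ᵥ ((Tmat N d).mulVec lam) := by
    rw [← mulVec_mulVec, dotProduct_mulVec, ← mulVec_transpose, Tmat_symm]
  rw [key, Tmat_mulVec N d lam hlam]
  simp only [dotProduct, Fintype.sum_prod_type]
  have expand : ∀ n : Fin N, ∑ k : Fin d,
      (lam (n, k) + (1 - ∑ l, lam (n, l)) / d)
        * (lam (n, k) + (1 - ∑ l, lam (n, l)) / d)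
      = (∑ k : Fin d, lam (n, k) ^ 2)
        + (1 / d) * (1 - (∑ l, lam (n, l)) ^ 2) := by
    intro n
    set S := ∑ l, lam (n, l) with hSdef
    have : ∀ k : Fin d, (lam (n, k) + (1 - S) / d) * (lam (n, k) + (1 - S) / d)
        = lam (n, k) ^ 2 + (2 * (1 - S) / d) * lam (n, k) + ((1 - S) / d) ^ 2 := by
      intro k; ring
    rw [Finset.sum_congr rfl fun k _ => this k, Finset.sum_add_distrib,
      Finset.sum_add_distrib, ← Finset.mul_sum, ← hSdef, Finset.sum_const,
      Finset.card_univ, Fintype.card_fin, nsmul_eq_mul]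
    field_simp
    ring
  rw [Finset.sum_congr rfl fun n _ => expand n, Finset.sum_add_distrib]
  have h2 : ∑ x : Fin N, 1 / (d : ℝ) * (1 - (∑ l, lam (x, l)) ^ 2)
      = (N : ℝ) / d - (1 / d) * ∑ n : Fin N, (∑ k, lam (n, k)) ^ 2 := by
    simp only [mul_sub, mul_one, Finset.sum_sub_distrib, Finset.sum_const,
      Finset.card_univ, Fintype.card_fin, nsmul_eq_mul, Finset.mul_sum]
    ring
  rw [h2]
  ring
end
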